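/- arXiv:1612.06808 — 2 statements merged into one kernel-verified Lean document; each statement's English description precedes it below -/
import Mathlib

section
/- Let κ, α, T > 0 with α < κ/T, and let t⋆ > 3T/2 (possibly +∞). Suppose y : [0,t⋆) → ℝ is continuous, C¹ on (0,t⋆), and satisfies y'(t) + κ y(t) ≤ α ∫_{t-T}^{t} y(s) ds for all t ∈ (3T/2, t⋆). Then there exists λ > 0 such that y(t) ≤ H e^{-λt} for all t ∈ [0,t⋆), where H := sup_{t ∈ [0,3T/2]} y(t) e^{λt}. -/
/-!
Choose `λ > 0` with `α (e^{λT} - 1) = λ (κ - λ)` and put `z t = y t * e^{λt}`. Suppose `z` attains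
its maximum `A` over `[0, t]` at some `t_m > 3T/2`. On every delay window `[x - T, x]` with
`x ≤ t_m` we then have `y s ≤ A e^{-λs}`, and by the choice of `λ` the delay inequality becomes
`z' ≤ (κ - λ) (A - z)` on `(3T/2, t_m)`. So `(A - z) e^{(κ - λ) t}` is nondecreasing there; it
vanishes at `t_m`, hence `A ≤ z (3T/2) ≤ H`.
-/

open Real Set Filter Topology

theorem exists_pos_mul_exp_sub_one_eq_mul_sub {κ α T : ℝ} (hα : 0 ≤ α) (hT : 0 < T)
    (hαT : α * T < κ) : ∃ lam > 0, α * (exp (lam * T) - 1) = lam * (κ - lam) := by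
  set φ : ℝ → ℝ := fun l => l * (κ - l) - α * (exp (l * T) - 1)
  -- `φ 0 = 0` and `φ' 0 = κ - α T > 0`, so `φ` is positive just right of `0`; and `φ κ ≤ 0`.
  have hsmall : ∀ᶠ δ in 𝓝[>] (0 : ℝ), δ + α * T * exp (δ * T) < κ := by
    have hc : ContinuousAt (fun δ : ℝ => δ + α * T * exp (δ * T)) 0 := by fun_prop
    exact (hc.eventually_lt continuousAt_const (by simpa using hαT)).filter_mono
      nhdsWithin_le_nhds
  obtain ⟨δ, hδκ, hδ : 0 < δ⟩ := (hsmall.and self_mem_nhdsWithin).exists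
  have hφδ : 0 ≤ φ δ := by
    have hexp : exp (δ * T) - 1 ≤ δ * T * exp (δ * T) := by
      have h := one_sub_le_exp_neg (δ * T)
      have h' : exp (-(δ * T)) * exp (δ * T) = 1 := by rw [← exp_add, neg_add_cancel, exp_zero]
      nlinarith [exp_pos (δ * T)]
    have hαexp : α * (exp (δ * T) - 1) ≤ δ * (α * T * exp (δ * T)) :=
      calc α * (exp (δ * T) - 1) ≤ α * (δ * T * exp (δ * T)) :=
            mul_le_mul_of_nonneg_left hexp hα
        _ = δ * (α * T * exp (δ * T)) := by ring
    have := mul_nonneg hδ.le (by linarith : 0 ≤ κ - δ - α * T * exp (δ * T))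
    simp only [φ]
    linarith
  have hδκ' : δ ≤ κ := by linarith [show 0 ≤ α * T * exp (δ * T) by positivity]
  have hφκ : φ κ ≤ 0 := by
    have : 1 ≤ exp (κ * T) := one_le_exp (mul_nonneg (by linarith) hT.le)
    simp only [φ, sub_self, mul_zero, zero_sub, neg_nonpos]
    exact mul_nonneg hα (by linarith)
  obtain ⟨lam, hlam, hroot⟩ := intermediate_value_Icc' hδκ'
    (by fun_prop : Continuous φ).continuousOn ⟨hφκ, hφδ⟩
  exact ⟨lam, hδ.trans_le hlam.1, by simp only [φ] at hroot; linarith⟩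

theorem integral_mul_exp_le {lam a b A : ℝ} {y : ℝ → ℝ} (hlam : 0 < lam) (hab : a ≤ b)
    (hy : ContinuousOn y (Icc a b)) (hA : ∀ s ∈ Icc a b, y s * exp (lam * s) ≤ A) :
    lam * (∫ s in a..b, y s) * exp (lam * b) ≤ A * (exp (lam * (b - a)) - 1) := by
  have hy_le : ∀ s ∈ Icc a b, y s ≤ A * exp (-lam * s) := fun s hs => by
    rw [neg_mul, exp_neg, ← div_eq_mul_inv, le_div_iff₀ (exp_pos _)]
    exact hA s hs
  have hint : ∫ s in a..b, A * exp (-lam * s) = A * (exp (-lam * a) - exp (-lam * b)) / lam := by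
    rw [intervalIntegral.integral_const_mul,
      intervalIntegral.integral_comp_mul_left (fun s => exp s) (neg_ne_zero.2 hlam.ne'),
      integral_exp, smul_eq_mul, inv_neg]
    field_simp
    ring
  calc lam * (∫ s in a..b, y s) * exp (lam * b)
      ≤ lam * (∫ s in a..b, A * exp (-lam * s)) * exp (lam * b) := by
        gcongr
        exact intervalIntegral.integral_mono_on hab (hy.intervalIntegrable_of_Icc hab)
          (Continuous.intervalIntegrable (by fun_prop) a b) hy_le
    _ = A * (exp (lam * (b - a)) - 1) := by
        rw [hint, mul_div_cancel₀ _ hlam.ne', mul_assoc, sub_mul, ← exp_add, ← exp_add,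
          show -lam * b + lam * b = 0 by ring, exp_zero]
        ring_nf

/-- A reverse Gronwall inequality: `(f b - f) e^{c t}` is nondecreasing on `[a, b]` and vanishes
at `b`. -/
theorem le_of_hasDerivAt_le_mul_sub {f f' : ℝ → ℝ} {a b c : ℝ} (hab : a ≤ b)
    (hf : ContinuousOn f (Icc a b)) (hderiv : ∀ x ∈ Ioo a b, HasDerivAt f (f' x) x)
    (hle : ∀ x ∈ Ioo a b, f' x ≤ c * (f b - f x)) : f b ≤ f a := by
  have hmono : MonotoneOn (fun t => (f b - f t) * exp (c * t)) (Icc a b) := by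
    refine monotoneOn_of_hasDerivWithinAt_nonneg (convex_Icc a b)
      ((continuousOn_const.sub hf).mul (by fun_prop))
      (f' := fun x => (c * (f b - f x) - f' x) * exp (c * x)) ?_ ?_
    · rw [interior_Icc]
      intro x hx
      have hexp : HasDerivAt (fun t => exp (c * t)) (exp (c * x) * c) x := by
        simpa using ((hasDerivAt_id x).const_mul c).exp
      exact ((((hasDerivAt_const x (f b)).fun_sub (hderiv x hx)).fun_mul hexp).congr_deriv
        (by ring)).hasDerivWithinAt
    · rw [interior_Icc]
      exact fun x hx => mul_nonneg (sub_nonneg.2 (hle x hx)) (exp_pos _).le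
  have h := hmono ⟨le_rfl, hab⟩ ⟨hab, le_rfl⟩ hab
  simp only [sub_self, zero_mul] at h
  linarith [nonpos_of_mul_nonpos_left h (exp_pos _)]

theorem mul_exp_deriv_le_of_delay_ineq {κ α T lam A x y'x : ℝ} {y : ℝ → ℝ} (hα : 0 ≤ α)
    (hlam : 0 < lam) (hroot : α * (exp (lam * T) - 1) = lam * (κ - lam)) (hT : 0 ≤ T)
    (hy : ContinuousOn y (Icc (x - T) x))
    (hA : ∀ s ∈ Icc (x - T) x, y s * exp (lam * s) ≤ A)
    (hineq : y'x + κ * y x ≤ α * ∫ s in (x - T)..x, y s) :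
    (y'x + lam * y x) * exp (lam * x) ≤ (κ - lam) * (A - y x * exp (lam * x)) := by
  have hdelay : α * (∫ s in (x - T)..x, y s) * exp (lam * x) ≤ (κ - lam) * A := by
    refine le_of_mul_le_mul_left ?_ hlam
    calc lam * (α * (∫ s in (x - T)..x, y s) * exp (lam * x))
        = α * (lam * (∫ s in (x - T)..x, y s) * exp (lam * x)) := by ring
      _ ≤ α * (A * (exp (lam * T) - 1)) := by
        refine mul_le_mul_of_nonneg_left ?_ hα
        simpa using integral_mul_exp_le hlam (by linarith) hy hA
      _ = lam * ((κ - lam) * A) := by rw [mul_left_comm, hroot]; ring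
  have hy' : y'x * exp (lam * x) ≤ (α * (∫ s in (x - T)..x, y s) - κ * y x) * exp (lam * x) := by
    gcongr
    linarith
  linarith

theorem mul_exp_le_of_delay_ineq {κ α T lam t₀ t₁ H : ℝ} {y y' : ℝ → ℝ} (hα : 0 ≤ α)
    (hlam : 0 < lam) (hroot : α * (exp (lam * T) - 1) = lam * (κ - lam)) (hT : 0 ≤ T)
    (hTt₀ : T ≤ t₀) (hy : ContinuousOn y (Icc 0 t₁))
    (hderiv : ∀ t ∈ Ioo t₀ t₁, HasDerivAt y (y' t) t)
    (hineq : ∀ t ∈ Ioo t₀ t₁, y' t + κ * y t ≤ α * ∫ s in (t - T)..t, y s)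
    (hH : ∀ t ∈ Icc 0 t₀, y t * exp (lam * t) ≤ H) :
    ∀ t ∈ Icc 0 t₁, y t * exp (lam * t) ≤ H := by
  set z : ℝ → ℝ := fun t => y t * exp (lam * t)
  have hz : ContinuousOn z (Icc 0 t₁) := hy.mul (by fun_prop)
  intro t ht
  obtain ⟨tm, htm, hmax⟩ := isCompact_Icc.exists_isMaxOn ⟨t, ht⟩ hz
  refine (hmax ht).trans ?_
  rcases le_or_gt tm t₀ with htm₀ | htm₀
  · exact hH tm ⟨htm.1, htm₀⟩
  have hsub : Icc t₀ tm ⊆ Icc 0 t₁ := Icc_subset_Icc (hT.trans hTt₀) htm.2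
  have hwindow : ∀ x ∈ Ioo t₀ tm, Icc (x - T) x ⊆ Icc 0 t₁ := fun x hx =>
    Icc_subset_Icc (by linarith [hx.1]) (hx.2.le.trans htm.2)
  have hzderiv : ∀ x ∈ Ioo t₀ tm,
      HasDerivAt z ((y' x + lam * y x) * exp (lam * x)) x := fun x hx => by
    have hexp : HasDerivAt (fun t => exp (lam * t)) (exp (lam * x) * lam) x := by
      simpa using ((hasDerivAt_id x).const_mul lam).exp
    exact ((hderiv x ⟨hx.1, hx.2.trans_le htm.2⟩).fun_mul hexp).congr_deriv (by ring)
  have hzt₀ : z tm ≤ z t₀ :=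
    le_of_hasDerivAt_le_mul_sub htm₀.le (hz.mono hsub) hzderiv fun x hx =>
      mul_exp_deriv_le_of_delay_ineq hα hlam hroot hT (hy.mono (hwindow x hx))
        (fun s hs => hmax (hwindow x hx hs)) (hineq x ⟨hx.1, hx.2.trans_le htm.2⟩)
  exact hzt₀.trans (hH t₀ ⟨hT.trans hTt₀, le_rfl⟩)

theorem delayed_gronwall_general (κ α T : ℝ) (hα : 0 < α) (hT : 0 < T)
    (hαT : α < κ / T) (tstar : EReal) (htstar : ((3 * T / 2 : ℝ) : EReal) < tstar)
    (y y' : ℝ → ℝ)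
    (hcont : ContinuousOn y {t : ℝ | 0 ≤ t ∧ (t : EReal) < tstar})
    (hderiv : ∀ t : ℝ, 0 < t → (t : EReal) < tstar → HasDerivAt y (y' t) t)
    (hineq : ∀ t : ℝ, 3 * T / 2 < t → (t : EReal) < tstar →
      y' t + κ * y t ≤ α * ∫ s in (t - T)..t, y s) :
    ∃ lam > (0 : ℝ), ∀ t : ℝ, 0 ≤ t → (t : EReal) < tstar →
      y t ≤ (⨆ s : Set.Icc (0 : ℝ) (3 * T / 2), y s * Real.exp (lam * s)) *
        Real.exp (-lam * t) := by
  obtain ⟨lam, hlam, hroot⟩ :=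
    exists_pos_mul_exp_sub_one_eq_mul_sub hα.le hT ((lt_div_iff₀ hT).1 hαT)
  refine ⟨lam, hlam, fun t ht htstar' => ?_⟩
  have hdomain : ∀ {t₁ : ℝ}, (t₁ : EReal) < tstar →
      Icc 0 t₁ ⊆ {t : ℝ | 0 ≤ t ∧ (t : EReal) < tstar} :=
    fun ht₁ s hs => ⟨hs.1, (EReal.coe_le_coe_iff.2 hs.2).trans_lt ht₁⟩
  have hbdd : BddAbove ((fun s => y s * exp (lam * s)) '' Icc 0 (3 * T / 2)) :=
    (isCompact_Icc.image_of_continuousOn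
      ((hcont.mono (hdomain htstar)).mul (by fun_prop))).bddAbove
  have hz := mul_exp_le_of_delay_ineq (y' := y') hα.le hlam hroot hT.le (by linarith)
    (hcont.mono (hdomain htstar'))
    (fun s hs => hderiv s (by linarith [hs.1]) ((EReal.coe_lt_coe_iff.2 hs.2).trans htstar'))
    (fun s hs => hineq s hs.1 ((EReal.coe_lt_coe_iff.2 hs.2).trans htstar'))
    (fun s hs => le_ciSup_set hbdd hs) t ⟨ht, le_rfl⟩
  rwa [neg_mul, exp_neg, ← div_eq_mul_inv, le_div_iff₀ (exp_pos _)]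

/-- Delayed Gronwall inequality: if `y' + κ y ≤ α ∫_{t-T}^t y` on `(3T/2, t⋆)` with
`α < κ/T`, then `y` decays exponentially, `y(t) ≤ H e^{-λt}` with
`H = sup_{[0,3T/2]} y(t) e^{λt}`.  The final time `t⋆ > 3T/2` may be `+∞`. -/
theorem delayed_gronwall (κ α T : ℝ) (hκ : 0 < κ) (hα : 0 < α) (hT : 0 < T)
    (hαT : α < κ / T) (tstar : EReal) (htstar : ((3 * T / 2 : ℝ) : EReal) < tstar)
    (y y' : ℝ → ℝ)
    (hcont : ContinuousOn y {t : ℝ | 0 ≤ t ∧ (t : EReal) < tstar})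
    (hcont' : ContinuousOn y' {t : ℝ | 0 < t ∧ (t : EReal) < tstar})
    (hderiv : ∀ t : ℝ, 0 < t → (t : EReal) < tstar → HasDerivAt y (y' t) t)
    (hineq : ∀ t : ℝ, 3 * T / 2 < t → (t : EReal) < tstar →
      y' t + κ * y t ≤ α * ∫ s in (t - T)..t, y s) :
    ∃ lam > (0 : ℝ), ∀ t : ℝ, 0 ≤ t → (t : EReal) < tstar →
      y t ≤ (⨆ s : Set.Icc (0 : ℝ) (3 * T / 2), y s * Real.exp (lam * s)) *
        Real.exp (-lam * t) :=
  delayed_gronwall_general κ α T hα hT hαT tstar htstar y y' hcont hderiv hineq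
end

section
/- Let κ, α, T > 0 with α < κ/T. Then the function φ(λ) = λ² - λκ + α(e^{λT} - 1) has a unique positive root λ > 0. Moreover, this root λ is non-increasing as a function of α (with κ, T fixed). -/
/-!
Strict convexity of `φ` together with `φ 0 = 0` makes the secant slope `φ(λ)/λ` strictly increasing
on `(0, ∞)`: there is at most one positive root, and `φ` is positive to the right of it. A root
exists by the intermediate value theorem, since `φ'(0) = αT - κ < 0` and `φ(κ) > 0`. Finally `φ`
increases with `α` on `[0, ∞)`, so a larger `α` cannot move the root to the right.
-/

open Real Set Filter Topology

lemma HasDerivAt.exists_mem_Ioo_lt_of_neg {f : ℝ → ℝ} {f' a b : ℝ} (hf : HasDerivAt f f' a)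
    (hf' : f' < 0) (hab : a < b) : ∃ x ∈ Ioo a b, f x < f a := by
  have hslope : ∀ᶠ x in 𝓝[>] a, slope f a x < 0 :=
    ((hasDerivAt_iff_tendsto_slope.mp hf).mono_left (nhdsGT_le_nhdsNE a)).eventually
      (gt_mem_nhds hf')
  obtain ⟨x, hneg, hx⟩ := (hslope.and (Ioo_mem_nhdsGT hab)).exists
  refine ⟨x, hx, ?_⟩
  rw [slope_def_field, div_neg_iff] at hneg
  rcases hneg with ⟨-, hxa⟩ | ⟨hfx, -⟩
  · exact absurd hx.1 (not_lt.mpr (sub_neg.mp hxa).le)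
  · exact sub_neg.mp hfx

lemma StrictConvexOn.pos_of_nonneg_of_lt {f : ℝ → ℝ} {a b : ℝ}
    (hf : StrictConvexOn ℝ (Ici 0) f) (h0 : f 0 = 0) (ha : 0 < a) (hfa : 0 ≤ f a) (hab : a < b) :
    0 < f b := by
  have hb : 0 < b := ha.trans hab
  have hsecant := hf.secant_strict_mono self_mem_Ici ha.le hb.le ha.ne' hb.ne' hab
  simp only [h0, sub_zero] at hsecant
  exact (div_pos_iff_of_pos_right hb).mp ((div_nonneg hfa ha.le).trans_lt hsecant)

lemma StrictConvexOn.eq_of_pos_of_map_eq_zero {f : ℝ → ℝ} {a b : ℝ}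
    (hf : StrictConvexOn ℝ (Ici 0) f) (h0 : f 0 = 0) (ha : 0 < a) (hb : 0 < b)
    (hfa : f a = 0) (hfb : f b = 0) : a = b := by
  by_contra hne
  rcases lt_or_gt_of_ne hne with hab | hba
  · exact (hf.pos_of_nonneg_of_lt h0 ha hfa.ge hab).ne' hfb
  · exact (hf.pos_of_nonneg_of_lt h0 hb hfb.ge hba).ne' hfa

noncomputable def phi (κ T α x : ℝ) : ℝ := x ^ 2 - x * κ + α * (exp (x * T) - 1)

section
variable {κ T α : ℝ}

lemma phi_zero : phi κ T α 0 = 0 := by simp [phi]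

lemma continuous_phi : Continuous (phi κ T α) := by unfold phi; fun_prop

lemma hasDerivAt_phi_zero : HasDerivAt (phi κ T α) (α * T - κ) 0 := by
  have h := (((hasDerivAt_pow 2 (0 : ℝ)).sub ((hasDerivAt_id 0).mul_const κ)).add
    ((((hasDerivAt_id 0).mul_const T).exp.sub_const 1).const_mul α))
  refine h.congr_deriv ?_
  simp only [Nat.cast_ofNat, Nat.add_one_sub_one, pow_one, mul_zero, one_mul, zero_sub, id_eq,
    zero_mul, exp_zero]
  ring

lemma strictConvexOn_phi (hα : 0 ≤ α) : StrictConvexOn ℝ univ (phi κ T α) := by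
  have hlin : ConvexOn ℝ univ fun x : ℝ => -(x * κ) :=
    (-LinearMap.mulRight ℝ κ).convexOn convex_univ
  have hexp : ConvexOn ℝ univ fun x : ℝ => α * (exp (x * T) - 1) :=
    ((convexOn_exp.comp_linearMap (LinearMap.mulRight ℝ T)).add_const (-1)).smul hα
  refine ((Even.strictConvexOn_pow even_two two_ne_zero).add_convexOn (hlin.add hexp)).congr
    fun x _ => ?_
  simp only [phi, Pi.add_apply]
  ring

lemma phi_pos (hα : 0 < α) (hT : 0 < T) {x : ℝ} (hx : 0 < x) (hκx : κ ≤ x) :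
    0 < phi κ T α x := by
  have hexp : 1 < exp (x * T) := one_lt_exp_iff.mpr (mul_pos hx hT)
  unfold phi
  nlinarith

lemma phi_mono_of_nonneg {α₁ α₂ x : ℝ} (hα : α₁ ≤ α₂) (hxT : 0 ≤ x * T) :
    phi κ T α₁ x ≤ phi κ T α₂ x := by
  have hexp : 0 ≤ exp (x * T) - 1 := sub_nonneg.mpr (one_le_exp hxT)
  unfold phi
  nlinarith

lemma exists_pos_phi_eq_zero (hκ : 0 < κ) (hT : 0 < T) (hα : 0 < α) (hακ : α * T < κ) :
    ∃ x, 0 < x ∧ phi κ T α x = 0 := by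
  obtain ⟨x₀, hx₀, hneg⟩ :=
    hasDerivAt_phi_zero.exists_mem_Ioo_lt_of_neg (sub_neg.mpr hακ) hκ
  rw [phi_zero] at hneg
  obtain ⟨x, hx, hroot⟩ := intermediate_value_Ioo hx₀.2.le continuous_phi.continuousOn
    ⟨hneg, phi_pos hα hT hκ le_rfl⟩
  exact ⟨x, hx₀.1.trans hx.1, hroot⟩

end

/-- For `κ, T > 0` and `0 < α < κ/T`, the function
`φ(λ) = λ² - λκ + α(e^{λT} - 1)` has a unique positive root, and this root is
non-increasing as a function of `α`. -/
theorem phi_unique_positive_root (κ T : ℝ) (hκ : 0 < κ) (hT : 0 < T) :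
    (∀ α : ℝ, 0 < α → α < κ / T →
      ∃! lam : ℝ, 0 < lam ∧ lam ^ 2 - lam * κ + α * (Real.exp (lam * T) - 1) = 0)
    ∧ (∀ α₁ α₂ lam₁ lam₂ : ℝ, 0 < α₁ → α₁ ≤ α₂ → α₂ < κ / T →
        0 < lam₁ → lam₁ ^ 2 - lam₁ * κ + α₁ * (Real.exp (lam₁ * T) - 1) = 0 →
        0 < lam₂ → lam₂ ^ 2 - lam₂ * κ + α₂ * (Real.exp (lam₂ * T) - 1) = 0 →
        lam₂ ≤ lam₁) := by
  have hconvex {α : ℝ} (hα : 0 < α) : StrictConvexOn ℝ (Ici 0) (phi κ T α) :=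
    (strictConvexOn_phi hα.le).subset (subset_univ _) (convex_Ici 0)
  refine ⟨fun α hα hακ => ?_, fun α₁ α₂ lam₁ lam₂ hα₁ hα₁₂ _ h₁ hroot₁ h₂ hroot₂ => ?_⟩
  · obtain ⟨lam, hlam, hroot⟩ := exists_pos_phi_eq_zero hκ hT hα ((lt_div_iff₀ hT).mp hακ)
    exact ⟨lam, ⟨hlam, hroot⟩, fun μ ⟨hμ, hμroot⟩ =>
      (hconvex hα).eq_of_pos_of_map_eq_zero phi_zero hμ hlam hμroot hroot⟩
  · by_contra! hlt
    have hpos : 0 < phi κ T α₁ lam₂ := (hconvex hα₁).pos_of_nonneg_of_lt phi_zero h₁ hroot₁.ge hlt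
    have hle : phi κ T α₁ lam₂ ≤ phi κ T α₂ lam₂ := phi_mono_of_nonneg hα₁₂ (mul_pos h₂ hT).le
    exact (hpos.trans_le hle).ne' hroot₂
end
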